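/- arXiv:1912.06902 — 2 statements merged into one kernel-verified Lean document; each statement's English description precedes it below -/
import Mathlib

section
/- Let R be a commutative ring and a0, a2, a3, a4, a5, z, w ∈ R with a0 + a2 + a3 + a4 + a5 = 0, and write a420 = a4 + a2 + a0. Define the Tate polynomial T(x, y, w) := x^3 + a4·z·w·x^2 + a2·z^3·w^2·x + a0·z^5·w^3 − (w·y^2 − (a5·w·x + a3·z^2·w^2)·y). Then T(z^2·w, −(z + a420)·z^2·w, w) = 0; that is, the locus {x = z^2·w, y = −(z + a420)·z^2·w} lies on the hypersurface {T = 0}, giving a third section υ of the elliptic fibration. -/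
/-- Under the condition `a₀ + a₂ + a₃ + a₄ + a₅ = 0`, the locus
`{x = z²·w, y = -(z + a420)·z²·w}` lies on the Tate hypersurface `{T = 0}`,
giving a third section `υ` of the elliptic fibration, where `a420 = a4 + a2 + a0`. -/
theorem third_section_on_tate {R : Type*} [CommRing R]
    (a0 a2 a3 a4 a5 z w : R) (hsum : a0 + a2 + a3 + a4 + a5 = 0)
    (a420 : R) (h420 : a420 = a4 + a2 + a0)
    (T : R → R → R → R)
    (hT : ∀ x y w', T x y w' =
      x ^ 3 + a4 * z * w' * x ^ 2 + a2 * z ^ 3 * w' ^ 2 * x + a0 * z ^ 5 * w' ^ 3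
        - (w' * y ^ 2 - (a5 * w' * x + a3 * z ^ 2 * w' ^ 2) * y)) :
    T (z ^ 2 * w) (-(z + a420) * z ^ 2 * w) w = 0 := by
  subst h420
  rw [hT]
  linear_combination (-(z + (a4 + a2 + a0)) * z ^ 4 * w ^ 3) * hsum
end

section
/- Let R be a commutative ring and a0, a2, a4, θ1, θ2, Z0, Z23, Z̃14 ∈ R. Set a5 := θ1·Z0 + θ2·Z23 and a420 := a4 + a2 + a0. Define D1(θ1, Z14, Z0) := (a5·θ1 + a4·Z14)^2 + 4·a5·a420·Z14^2 + (−2·a5·θ1^3 − 2·a4·θ1^2·Z14 + (6·a5 − 4·a420)·θ1·Z14^2 − (2·a4 + 4·a2 − 4·a5)·Z14^3)·Z0 + (θ1^4 − 6·θ1^2·Z14^2 − 8·Z14^3·θ1 − 3·Z14^4)·Z0^2. Then D1(θ1, Z̃14·Z23, Z0) = Z23^2·D2, where D2 := (θ1·θ2 + a4·Z̃14)^2 + ((6·a5 + 4·a420)·θ2 − (4·a5 + 2·a4 + 4·a2)·Z0·Z̃14)·Z̃14^2·Z23 − (6·θ2^2 − 8·θ2·Z0·Z̃14 + 3·Z̃14^2·Z0^2)·Z̃14^2·Z23^2.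 -/
/-- Second modification: blowing up `{a₅ - θ₁·Z₀ = Z₁₄ = 0}` via `Z₁₄ = Z̃₁₄·Z₂₃`
and the relation `a₅ = θ₁·Z₀ + θ₂·Z₂₃`, the total transform of `Δ⁽¹⁾` is `Z₂₃²`
times the proper transform `Δ⁽²⁾` whose equation is `D2 = 0`. -/
theorem branch_locus_second_modification {R : Type*} [CommRing R]
    (a0 a2 a4 θ1 θ2 Z0 Z23 Zt14 : R)
    (a5 : R) (ha5 : a5 = θ1 * Z0 + θ2 * Z23)
    (a420 : R) (h420 : a420 = a4 + a2 + a0)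
    (D1 : R → R → R → R)
    (hD1 : ∀ θ1' Z14' Z0', D1 θ1' Z14' Z0' =
      (a5 * θ1' + a4 * Z14') ^ 2 + 4 * a5 * a420 * Z14' ^ 2
        + (-(2 * a5 * θ1' ^ 3) - 2 * a4 * θ1' ^ 2 * Z14' + (6 * a5 - 4 * a420) * θ1' * Z14' ^ 2
            - (2 * a4 + 4 * a2 - 4 * a5) * Z14' ^ 3) * Z0'
        + (θ1' ^ 4 - 6 * θ1' ^ 2 * Z14' ^ 2 - 8 * Z14' ^ 3 * θ1' - 3 * Z14' ^ 4) * Z0' ^ 2)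
    (D2 : R)
    (hD2 : D2 =
      (θ1 * θ2 + a4 * Zt14) ^ 2
        + ((6 * a5 + 4 * a420) * θ2 - (4 * a5 + 2 * a4 + 4 * a2) * Z0 * Zt14) * Zt14 ^ 2 * Z23
        - (6 * θ2 ^ 2 - 8 * θ2 * Z0 * Zt14 + 3 * Zt14 ^ 2 * Z0 ^ 2) * Zt14 ^ 2 * Z23 ^ 2) :
    D1 θ1 (Zt14 * Z23) Z0 = Z23 ^ 2 * D2 := by
  subst ha5 h420 hD2; rw [hD1]; ring
end
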